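/- If a lattice-linear homomorphism φ : SO → ℝ satisfies φ(1) = 0, then φ is the zero homomorphism: φ(f) = 0 for every f ∈ SO. -/

import Mathlib

open Filter Metric Set
open Topology

noncomputable section

/-- A continuous function on the half-line `[0,∞)` (modeled as `ℝ≥0`) is
slowly oscillating if for every `R > 0` and `ε > 0` there is `M > 0` with
`diam f([x, x+R]) < ε` for all `x > M`. -/
def SO (f : NNReal → ℝ) : Prop :=
  Continuous f ∧ ∀ R : NNReal, 0 < R → ∀ ε : ℝ, 0 < ε → ∃ M : NNReal, 0 < M ∧
    ∀ x : NNReal, M < x → Metric.diam (f '' Set.Icc x (x + R)) < ε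

/-- A lattice-linear homomorphism of the vector lattice `SO`, encoded as a
function on all of `NNReal → ℝ` whose homomorphism properties are required on
slowly oscillating functions. -/
def IsHom (φ : (NNReal → ℝ) → ℝ) : Prop :=
  (∀ f g : NNReal → ℝ, SO f → SO g → ∀ c d : ℝ,
      φ (c • f + d • g) = c * φ f + d * φ g) ∧
  (∀ f g : NNReal → ℝ, SO f → SO g → φ (f ⊔ g) = φ f ⊔ φ g) ∧
  (∀ f g : NNReal → ℝ, SO f → SO g → φ (f ⊓ g) = φ f ⊓ φ g)

lemma diam_image_le {g : NNReal → ℝ} {s : Set NNReal} {d : ℝ} (hd : 0 ≤ d)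
    (H : ∀ u ∈ s, ∀ v ∈ s, dist (g u) (g v) ≤ d) :
    Metric.diam (g '' s) ≤ d := by
  apply Metric.diam_le_of_forall_dist_le hd
  rintro _ ⟨u, hu, rfl⟩ _ ⟨v, hv, rfl⟩
  exact H u hu v hv

lemma so_const (c : ℝ) : SO (fun _ => c) := by
  refine ⟨continuous_const, fun R hR ε hε => ⟨1, one_pos, fun x hx => ?_⟩⟩
  have h : Metric.diam ((fun _ : NNReal => c) '' Icc x (x + R)) ≤ 0 :=
    diam_image_le le_rfl (by intro u hu v hv; simp)
  linarith

lemma so_one : SO (1 : NNReal → ℝ) := so_const 1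
lemma so_zero : SO (0 : NNReal → ℝ) := so_const 0

lemma so_smul {f : NNReal → ℝ} (hf : SO f) (c : ℝ) : SO (c • f) := by
  refine ⟨hf.1.const_smul c, fun R hR ε hε => ?_⟩
  obtain ⟨M, hM, hM2⟩ := hf.2 R hR (ε / (|c| + 1)) (by positivity)
  refine ⟨M, hM, fun x hx => ?_⟩
  have hb : Bornology.IsBounded (f '' Icc x (x + R)) := (isCompact_Icc.image hf.1).isBounded
  have hd0 : 0 ≤ Metric.diam (f '' Icc x (x + R)) := diam_nonneg
  have hkey : Metric.diam ((c • f) '' Icc x (x + R)) ≤ |c| * Metric.diam (f '' Icc x (x + R)) := by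
    apply diam_image_le (by positivity)
    intro u hu v hv
    have h1 : dist ((c • f) u) ((c • f) v) = |c| * dist (f u) (f v) := by
      simp only [Pi.smul_apply, smul_eq_mul, Real.dist_eq, ← mul_sub, abs_mul]
    rw [h1]
    exact mul_le_mul_of_nonneg_left (dist_le_diam_of_mem hb ⟨u, hu, rfl⟩ ⟨v, hv, rfl⟩)
      (abs_nonneg c)
  have hlt := hM2 x hx
  have h2 : Metric.diam (f '' Icc x (x + R)) * (|c| + 1) < ε :=
    (lt_div_iff₀ (by positivity)).1 hlt
  have hcab : (0:ℝ) ≤ |c| := abs_nonneg c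
  nlinarith [hkey, hd0, h2]
lemma so_neg {f : NNReal → ℝ} (hf : SO f) : SO (-f) := by
  have h := so_smul hf (-1)
  rwa [show (-1 : ℝ) • f = -f by funext x; simp] at h

lemma so_add_const {f : NNReal → ℝ} (hf : SO f) (c : ℝ) : SO (f + c • 1) := by
  refine ⟨hf.1.add (continuous_one.const_smul c), fun R hR ε hε => ?_⟩
  obtain ⟨M, hM, hM2⟩ := hf.2 R hR ε hε
  refine ⟨M, hM, fun x hx => ?_⟩
  have hb : Bornology.IsBounded (f '' Icc x (x + R)) := (isCompact_Icc.image hf.1).isBounded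
  have hd0 : 0 ≤ Metric.diam (f '' Icc x (x + R)) := diam_nonneg
  have hkey : Metric.diam ((f + c • 1) '' Icc x (x + R)) ≤ Metric.diam (f '' Icc x (x + R)) := by
    apply diam_image_le hd0
    intro u hu v hv
    have h1 : dist ((f + c • 1) u) ((f + c • 1) v) = dist (f u) (f v) := by
      simp [Real.dist_eq]
    rw [h1]
    exact dist_le_diam_of_mem hb ⟨u, hu, rfl⟩ ⟨v, hv, rfl⟩
  exact lt_of_le_of_lt hkey (hM2 x hx)

section Hom
variable {φ : (NNReal → ℝ) → ℝ}

lemma phi_smul (hφ : IsHom φ) {f : NNReal → ℝ} (hf : SO f) (c : ℝ) : φ (c • f) = c * φ f := by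
  have h := hφ.1 f f hf hf c 0
  simpa using h

lemma phi_zero (hφ : IsHom φ) : φ 0 = 0 := by
  have h := phi_smul hφ so_zero 0
  simpa using h

lemma phi_mono (hφ : IsHom φ) {u v : NNReal → ℝ} (hu : SO u) (hv : SO v)
    (huv : ∀ x, u x ≤ v x) : φ u ≤ φ v := by
  have h := hφ.2.1 u v hu hv
  have he : u ⊔ v = v := funext fun x => sup_eq_right.2 (huv x)
  rw [he] at h
  rw [h]
  exact le_sup_left

lemma phi_add_const (hφ : IsHom φ) (h1 : φ 1 = 0) {f : NNReal → ℝ} (hf : SO f) (c : ℝ) :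
    φ (f + c • 1) = φ f := by
  have h := hφ.1 f 1 hf so_one 1 c
  rw [one_smul] at h
  rw [h, h1]
  ring

end Hom
lemma exists_majorant {f : NNReal → ℝ} (hf : SO f) :
    ∃ m : NNReal → ℝ, SO m ∧ Monotone m ∧ (∀ x, 0 ≤ m x) ∧ (∀ x, f x ≤ m x) := by
  set m : NNReal → ℝ := fun x => sSup (insert 0 (f '' Icc 0 x)) with hm_def
  have hbdd : ∀ x, BddAbove (insert 0 (f '' Icc 0 x)) := fun x =>
    ((isCompact_Icc.image hf.1).bddAbove).insert 0
  have hne : ∀ x : NNReal, (insert (0:ℝ) (f '' Icc 0 x)).Nonempty := fun x =>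
    insert_nonempty _ _
  have h0 : ∀ x, 0 ≤ m x := fun x => le_csSup (hbdd x) (mem_insert _ _)
  have hfm : ∀ x, f x ≤ m x := fun x =>
    le_csSup (hbdd x) (mem_insert_of_mem _ ⟨x, ⟨zero_le, le_rfl⟩, rfl⟩)
  have hmono : Monotone m := fun x y hxy =>
    csSup_le_csSup (hbdd y) (hne x)
      (insert_subset_insert (image_mono (Icc_subset_Icc le_rfl hxy)))
  have hkey : ∀ x y : NNReal, x ≤ y → m y ≤ m x + Metric.diam (f '' Icc x y) := by
    intro x y hxy
    have hb : Bornology.IsBounded (f '' Icc x y) := (isCompact_Icc.image hf.1).isBounded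
    have hd0 : 0 ≤ Metric.diam (f '' Icc x y) := diam_nonneg
    apply csSup_le (hne y)
    rintro z (rfl | ⟨t, ht, rfl⟩)
    · have := h0 x; linarith
    · rcases le_total t x with htx | hxt
      · have h1 : f t ≤ m x := le_csSup (hbdd x) (mem_insert_of_mem _ ⟨t, ⟨ht.1, htx⟩, rfl⟩)
        linarith
      · have hd : dist (f t) (f x) ≤ Metric.diam (f '' Icc x y) :=
          dist_le_diam_of_mem hb ⟨t, ⟨hxt, ht.2⟩, rfl⟩ ⟨x, ⟨le_rfl, hxy⟩, rfl⟩
        have h2 : f t - f x ≤ Metric.diam (f '' Icc x y) :=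
          (le_abs_self _).trans (by rwa [Real.dist_eq] at hd)
        have h3 : f x ≤ m x := hfm x
        linarith
  have hcont : Continuous m := by
    rw [continuous_iff_continuousAt]
    intro x₀
    rw [Metric.continuousAt_iff]
    intro ε hε
    obtain ⟨δ, hδ, hδ2⟩ := Metric.continuousAt_iff.1 hf.1.continuousAt (ε/4) (by linarith)
    refine ⟨δ, hδ, ?_⟩
    intro y hy
    have hdist : ∀ u v : NNReal, min y x₀ ≤ u → u ≤ max y x₀ →
        min y x₀ ≤ v → v ≤ max y x₀ → dist (f u) (f v) ≤ ε/2 := by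
      intro u v hu1 hu2 hv1 hv2
      have hclose : ∀ t : NNReal, min y x₀ ≤ t → t ≤ max y x₀ → dist t x₀ < δ := by
        intro t h1 h2
        have hyx : dist y x₀ < δ := hy
        rw [NNReal.dist_eq] at hyx ⊢
        rcases le_total y x₀ with hc | hc
        · rw [min_eq_left hc] at h1; rw [max_eq_right hc] at h2
          have c1 : (y:ℝ) ≤ t := h1
          have c2 : (t:ℝ) ≤ x₀ := h2
          rw [abs_of_nonpos (by linarith)] at hyx ⊢
          linarith
        · rw [min_eq_right hc] at h1; rw [max_eq_left hc] at h2
          have c1 : (x₀:ℝ) ≤ t := h1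
          have c2 : (t:ℝ) ≤ y := h2
          rw [abs_of_nonneg (by linarith)] at hyx ⊢
          linarith
      have d1 := hδ2 (hclose u hu1 hu2)
      have d2 := hδ2 (hclose v hv1 hv2)
      calc dist (f u) (f v) ≤ dist (f u) (f x₀) + dist (f x₀) (f v) := dist_triangle _ _ _
        _ ≤ ε/4 + ε/4 := by rw [dist_comm (f x₀)]; exact add_le_add d1.le d2.le
        _ = ε/2 := by ring
    have hdiam : Metric.diam (f '' Icc (min y x₀) (max y x₀)) ≤ ε/2 := by
      apply diam_image_le (by linarith)
      intro u hu v hv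
      exact hdist u v hu.1 hu.2 hv.1 hv.2
    rcases le_total y x₀ with hc | hc
    · have hb := hkey y x₀ hc
      rw [min_eq_left hc, max_eq_right hc] at hdiam
      have hmle : m y ≤ m x₀ := hmono hc
      rw [Real.dist_eq, abs_of_nonpos (by linarith)]
      linarith
    · have hb := hkey x₀ y hc
      rw [min_eq_right hc, max_eq_left hc] at hdiam
      have hmle : m x₀ ≤ m y := hmono hc
      rw [Real.dist_eq, abs_of_nonneg (by linarith)]
      linarith
  refine ⟨m, ⟨hcont, ?_⟩, hmono, h0, hfm⟩
  intro R hR ε hε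
  obtain ⟨M, hM, hM2⟩ := hf.2 R hR ε hε
  refine ⟨M, hM, fun x hx => ?_⟩
  have h1 : Metric.diam (m '' Icc x (x + R)) ≤ m (x + R) - m x := by
    apply diam_image_le (by have := hmono (le_self_add : x ≤ x + R); linarith)
    intro u hu v hv
    rw [Real.dist_eq, abs_le]
    constructor
    · have := hmono hu.1; have := hmono hv.2; linarith
    · have := hmono hv.1; have := hmono hu.2; linarith
  have h2 := hkey x (x + R) le_self_add
  have h3 := hM2 x hx
  linarith
lemma exists_dominator {m : NNReal → ℝ} (hm : SO m) (hmono : Monotone m) :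
    ∃ h : NNReal → ℝ, SO h ∧ ∀ k : ℕ, ∃ C : ℝ, ∀ x, (k:ℝ) * m x ≤ h x + C := by
  classical
  have hMex : ∀ n : ℕ, ∃ M : NNReal, 0 < M ∧ ∀ x : NNReal, M < x →
      Metric.diam (m '' Icc x (x + ((n:NNReal)+1))) < (((n:ℝ)+2)^2)⁻¹ := by
    intro n
    exact hm.2 ((n:NNReal)+1) (by positivity) _ (by positivity)
  choose M hMpos hMspec using hMex
  set X : ℕ → NNReal :=
    fun n => Nat.rec 0 (fun k Xk => max (Xk + ((k:NNReal)+1)) (M k + 1)) n with hX_def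
  have X_zero : X 0 = 0 := rfl
  have X_succ : ∀ n, X (n+1) = max (X n + ((n:NNReal)+1)) (M n + 1) := fun n => rfl
  have X_gapR : ∀ n, X n + ((n:NNReal)+1) ≤ X (n+1) := fun n => by
    rw [X_succ]; exact le_max_left _ _
  have X_gtM : ∀ n, M n < X (n+1) := fun n => by
    rw [X_succ]; exact lt_of_lt_of_le (lt_add_one _) (le_max_right _ _)
  have X_lt : ∀ n, X n < X (n+1) := fun n =>
    lt_of_lt_of_le (lt_add_of_pos_right _ (by positivity)) (X_gapR n)
  have X_mono : StrictMono X := strictMono_nat_of_lt_succ X_lt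
  have X_ge : ∀ n : ℕ, (n : NNReal) ≤ X n := by
    intro n
    induction n with
    | zero => simp [X_zero]
    | succ k ih =>
      calc ((k+1 : ℕ) : NNReal) = (k:NNReal) + 1 := by push_cast; ring
        _ ≤ X k + ((k:NNReal) + 1) := le_add_self
        _ ≤ X (k+1) := X_gapR k
  have level : ∀ x : NNReal, ∃ n, X n ≤ x ∧ x < X (n+1) := by
    intro x
    obtain ⟨k, hk⟩ := exists_nat_gt x
    have hex : ∃ n, x < X n := ⟨k, hk.trans_le (X_ge k)⟩
    have hspec : x < X (Nat.find hex) := Nat.find_spec hex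
    have hn0 : Nat.find hex ≠ 0 := by
      intro hcon
      rw [hcon, X_zero] at hspec
      exact (not_lt_of_ge (zero_le : (0:NNReal) ≤ x)) hspec
    obtain ⟨p, hp⟩ := Nat.exists_eq_succ_of_ne_zero hn0
    refine ⟨p, ?_, ?_⟩
    · by_contra hcon
      push_neg at hcon
      exact Nat.find_min hex (by omega) hcon
    · rw [show p + 1 = Nat.find hex by omega]; exact hspec
  set c : ℕ → ℝ := fun n => ∑ j ∈ Finset.range n, m (X (j+1)) with hc_def
  set a : ℕ → NNReal → ℝ := fun k x => (k:ℝ) * m x - c k with ha_def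
  have a_succ : ∀ k x, a (k+1) x = a k x + (m x - m (X (k+1))) := by
    intro k x
    simp only [ha_def, hc_def, Finset.sum_range_succ]
    push_cast; ring
  have attain : ∀ n (x : NNReal), X n ≤ x → x ≤ X (n+1) → ∀ k, a k x ≤ a n x := by
    intro n x hx1 hx2 k
    rcases le_total k n with hk | hk
    · have up : ∀ j, k ≤ j → j ≤ n → a k x ≤ a j x := by
        intro j hj
        induction j, hj using Nat.le_induction with
        | base => intro _; exact le_rfl
        | succ j hkj ih =>
          intro hjn
          have h1 : a k x ≤ a j x := ih (by omega)
          have h2 : X (j+1) ≤ x := le_trans (X_mono.monotone (by omega : j+1 ≤ n)) hx1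
          have h3 : m (X (j+1)) ≤ m x := hmono h2
          rw [a_succ]; linarith
      exact up n hk le_rfl
    · have down : ∀ j, n ≤ j → a j x ≤ a n x := by
        intro j hj
        induction j, hj using Nat.le_induction with
        | base => exact le_rfl
        | succ j hnj ih =>
          have h2 : x ≤ X (j+1) := le_trans hx2 (X_mono.monotone (by omega : n+1 ≤ j+1))
          have h3 : m x ≤ m (X (j+1)) := hmono h2
          rw [a_succ]; linarith
      exact down k hk
  have bdd : ∀ x : NNReal, BddAbove (Set.range fun k => a k x) := by
    intro x
    obtain ⟨n, hn1, hn2⟩ := level x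
    exact ⟨a n x, by rintro _ ⟨k, rfl⟩; exact attain n x hn1 hn2.le k⟩
  set h : NNReal → ℝ := fun x => ⨆ k, a k x with hh_def
  have a_le_h : ∀ k x, a k x ≤ h x := fun k x => le_ciSup (bdd x) k
  have h_eq : ∀ n (x : NNReal), X n ≤ x → x ≤ X (n+1) → h x = a n x := fun n x h1 h2 =>
    le_antisymm (ciSup_le (attain n x h1 h2)) (a_le_h n x)
  have a_mono : ∀ k, Monotone (a k) := by
    intro k x y hxy
    simp only [ha_def]
    have h1 : m x ≤ m y := hmono hxy
    have h2 : (0:ℝ) ≤ (k:ℝ) := Nat.cast_nonneg k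
    nlinarith
  have h_mono : Monotone h := fun x y hxy =>
    ciSup_le fun k => (a_mono k hxy).trans (a_le_h k y)
  have a_cont : ∀ k, Continuous (a k) := fun k =>
    (continuous_const.mul hm.1).sub continuous_const
  set pm : ℕ → NNReal → ℝ := fun N => Nat.rec (a 0) (fun k pk => pk ⊔ a (k+1)) N with hpm_def
  have pm_succ : ∀ N, pm (N+1) = pm N ⊔ a (N+1) := fun N => rfl
  have pm_cont : ∀ N, Continuous (pm N) := by
    intro N
    induction N with
    | zero => exact a_cont 0
    | succ k ih => rw [pm_succ]; exact ih.sup (a_cont (k+1))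
  have pm_le_h : ∀ N x, pm N x ≤ h x := by
    intro N x
    induction N with
    | zero => exact a_le_h 0 x
    | succ k ih =>
      rw [pm_succ]
      exact sup_le ih (a_le_h (k+1) x)
  have a_le_pm : ∀ N k, k ≤ N → ∀ x, a k x ≤ pm N x := by
    intro N
    induction N with
    | zero => intro k hk x; interval_cases k; exact le_rfl
    | succ j ih =>
      intro k hk x
      rw [pm_succ]
      rcases Nat.lt_or_ge k (j+1) with hc | hc
      · exact le_trans (ih k (by omega) x) le_sup_left
      · have : k = j + 1 := by omega
        subst this
        exact le_sup_right
  have pm_eq : ∀ N (x : NNReal), x < X (N+1) → pm N x = h x := by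
    intro N x hx
    obtain ⟨n, hn1, hn2⟩ := level x
    have hnN : n ≤ N := by
      by_contra hcon
      push_neg at hcon
      exact absurd hn1 (not_le.2 (lt_of_lt_of_le hx (X_mono.monotone hcon)))
    rw [h_eq n x hn1 hn2.le]
    exact le_antisymm (by rw [← h_eq n x hn1 hn2.le]; exact pm_le_h N x) (a_le_pm N n hnN x)
  have h_cont : Continuous h := by
    rw [continuous_iff_continuousAt]
    intro x₀
    obtain ⟨n, hn1, hn2⟩ := level x₀
    have hmem : Iio (X (n+1)) ∈ 𝓝 x₀ := isOpen_Iio.mem_nhds hn2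
    have heq : h =ᶠ[𝓝 x₀] pm n :=
      Filter.eventually_of_mem hmem fun y hy => (pm_eq n y hy).symm
    exact (pm_cont n).continuousAt.congr heq.symm
  have hdom : ∀ k : ℕ, ∃ C : ℝ, ∀ x, (k:ℝ) * m x ≤ h x + C := by
    intro k
    refine ⟨c k, fun x => ?_⟩
    have := a_le_h k x
    simp only [ha_def] at this
    linarith
  refine ⟨h, ⟨h_cont, ?_⟩, hdom⟩
  intro R hR ε hε
  obtain ⟨N₁, hN₁⟩ := exists_nat_ge R
  obtain ⟨N₂, hN₂⟩ := exists_nat_gt ε⁻¹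
  set N := max N₁ N₂ with hN_def
  refine ⟨X (N+1), by rw [← X_zero]; exact X_mono (Nat.succ_pos N), fun x hx => ?_⟩
  obtain ⟨n, hn1, hn2⟩ := level x
  have hNn : N < n := by
    by_contra hcon
    push_neg at hcon
    have hle : n + 1 ≤ N + 1 := by omega
    have : X (n+1) ≤ X (N+1) := X_mono.monotone hle
    exact absurd (lt_trans hx hn2) (not_lt.2 this)
  obtain ⟨p, rfl⟩ : ∃ p, n = p + 1 := ⟨n - 1, by omega⟩
  have hNp : N ≤ p := by omega
  have hRp : R ≤ (p : NNReal) := by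
    calc R ≤ (N₁ : NNReal) := hN₁
      _ ≤ (N : NNReal) := by exact_mod_cast Nat.cast_le.2 (le_max_left N₁ N₂)
      _ ≤ (p : NNReal) := by exact_mod_cast Nat.cast_le.2 hNp
  -- oscillation bound for m on [x, x+p+1]
  have hMp : M p < x := lt_of_lt_of_le (X_gtM p) hn1
  have hosc := hMspec p x hMp
  -- level of x + R
  obtain ⟨L, hL1, hL2⟩ := level (x + R)
  have hLle : L ≤ p + 2 := by
    have hstep : x + R < X (p+3) := by
      have h1 : x + R < X (p+2) + R := add_lt_add_left hn2 R
      have h2 : X (p+2) + R ≤ X (p+2) + (((p+2:ℕ):NNReal) + 1) := by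
        apply add_le_add_right
        calc R ≤ (p:NNReal) := hRp
          _ ≤ ((p+2:ℕ):NNReal) + 1 := by push_cast; exact le_trans le_self_add le_self_add
      exact lt_of_lt_of_le h1 (le_trans h2 (X_gapR (p+2)))
    by_contra hcon
    push_neg at hcon
    have hle : p + 3 ≤ L := by omega
    have : X (p+3) ≤ X L := X_mono.monotone hle
    exact absurd hL1 (not_le.2 (lt_of_lt_of_le hstep this))
  -- main estimate
  have hbm : Bornology.IsBounded (m '' Icc x (x + ((p:NNReal)+1))) :=
    (isCompact_Icc.image hm.1).isBounded
  have hmm : m x ≤ m (x + R) := hmono le_self_add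
  have hosc2 : m (x + R) - m x ≤ Metric.diam (m '' Icc x (x + ((p:NNReal)+1))) := by
    have hmem1 : x ∈ Icc x (x + ((p:NNReal)+1)) := ⟨le_rfl, le_self_add⟩
    have hmem2 : x + R ∈ Icc x (x + ((p:NNReal)+1)) :=
      ⟨le_self_add, add_le_add_right (le_trans hRp le_self_add) x⟩
    have := dist_le_diam_of_mem hbm ⟨_, hmem2, rfl⟩ ⟨_, hmem1, rfl⟩
    rwa [Real.dist_eq, abs_of_nonneg (by linarith)] at this
  have hhx : h (x + R) - h x ≤ (L:ℝ) * (m (x + R) - m x) := by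
    have e1 : h (x + R) = a L (x + R) := h_eq L (x + R) hL1 hL2.le
    have e2 : a L x ≤ h x := a_le_h L x
    rw [e1]
    simp only [ha_def] at e2 ⊢
    linarith
  have hL2' : (L:ℝ) ≤ (p:ℝ) + 2 := by exact_mod_cast Nat.cast_le.2 hLle |>.trans (by push_cast; linarith)
  have hdm : Metric.diam (h '' Icc x (x + R)) ≤ h (x + R) - h x := by
    apply diam_image_le (by have := h_mono (le_self_add : x ≤ x + R); linarith)
    intro u hu v hv
    rw [Real.dist_eq, abs_le]
    constructor
    · have := h_mono hu.1; have := h_mono hv.2; linarith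
    · have := h_mono hv.1; have := h_mono hu.2; linarith
  have hp2 : (0:ℝ) < (p:ℝ) + 2 := by positivity
  have hfin : ((p:ℝ)+2)⁻¹ < ε := by
    have h1 : ε⁻¹ < (p:ℝ) + 2 := by
      calc ε⁻¹ < (N₂:ℝ) := hN₂
        _ ≤ (p:ℝ) := by exact_mod_cast le_trans (le_max_right N₁ N₂) hNp
        _ ≤ (p:ℝ) + 2 := by linarith
    calc ((p:ℝ)+2)⁻¹ < (ε⁻¹)⁻¹ := by
          apply inv_strictAnti₀ (by positivity) h1
      _ = ε := inv_inv ε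
  have hΔ : m (x + R) - m x < (((p:ℝ)+2)^2)⁻¹ := lt_of_le_of_lt hosc2 hosc
  calc Metric.diam (h '' Icc x (x + R)) ≤ h (x + R) - h x := hdm
    _ ≤ (L:ℝ) * (m (x + R) - m x) := hhx
    _ ≤ ((p:ℝ)+2) * (m (x + R) - m x) := by nlinarith
    _ < ((p:ℝ)+2) * (((p:ℝ)+2)^2)⁻¹ := by
        apply mul_lt_mul_of_pos_left hΔ hp2
    _ = ((p:ℝ)+2)⁻¹ := by field_simp
    _ < ε := hfin
lemma phi_nonpos {φ : (NNReal → ℝ) → ℝ} (hφ : IsHom φ) (h1 : φ 1 = 0)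
    {f : NNReal → ℝ} (hf : SO f) : φ f ≤ 0 := by
  obtain ⟨m, hm, hmono, hm0, hfm⟩ := exists_majorant hf
  obtain ⟨h, hh, hdom⟩ := exists_dominator hm hmono
  have hstep : ∀ k : ℕ, (k:ℝ) * φ m ≤ φ h := by
    intro k
    obtain ⟨C, hC⟩ := hdom k
    have e1 : φ ((k:ℝ) • m) = (k:ℝ) * φ m := phi_smul hφ hm _
    have e2 : φ (h + C • 1) = φ h := phi_add_const hφ h1 hh C
    have e3 : φ ((k:ℝ) • m) ≤ φ (h + C • 1) := by
      apply phi_mono hφ (so_smul hm _) (so_add_const hh C)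
      intro x
      have := hC x
      simp only [Pi.add_apply, Pi.smul_apply, Pi.one_apply, smul_eq_mul, mul_one]
      linarith
    rw [e1, e2] at e3
    exact e3
  have hmle : φ m ≤ 0 := by
    by_contra hpos
    push_neg at hpos
    obtain ⟨k, hk⟩ := exists_nat_gt (φ h / φ m)
    have h2 : φ h < (k:ℝ) * φ m := by
      rw [div_lt_iff₀ hpos] at hk
      linarith
    exact absurd (hstep k) (not_le.2 h2)
  exact le_trans (phi_mono hφ hf hm hfm) hmle

theorem stmt_11 (φ : (NNReal → ℝ) → ℝ) (hφ : IsHom φ) (h1 : φ 1 = 0) :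
    ∀ f : NNReal → ℝ, SO f → φ f = 0 := by
  intro f hf
  have ha := phi_nonpos hφ h1 hf
  have hb := phi_nonpos hφ h1 (so_neg hf)
  have hc : φ (-f) = -φ f := by
    have := phi_smul hφ hf (-1)
    rwa [show (-1 : ℝ) • f = -f by funext x; simp, neg_one_mul] at this
  linarith
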